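/- arXiv:1808.00759 — 5 statements merged into one kernel-verified Lean document; each statement's English description precedes it below -/
import Mathlib

section
/- For any real number α > 0 and natural number p, the generalized binomial coefficient identity holds: C(2α, 2p) = Σ_{j=0}^{p} 2^{2j} · C(α, p+j) · C(p+j, 2j), where C(α, k) = α(α-1)···(α-k+1)/k! is the generalized binomial coefficient. -/
/-!
Both sides are polynomials in `α`, so it suffices that they agree at every natural number
`α = n`. There the identity compares the coefficients of `X ^ (2 * p)` in
`(1 + X) ^ (2 * n) = (1 + X * (X + 2)) ^ n`: on the right, the term `(X * (X + 2)) ^ (p + j)`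
contributes `2 ^ (2 * j) * (p + j).choose (2 * j)`.
-/

/-- Generalized binomial coefficient `C(x, k) = x(x-1)⋯(x-k+1)/k!`. -/
noncomputable def gchoose (x : ℝ) (k : ℕ) : ℝ :=
  (∏ i ∈ Finset.range k, (x - i)) / (Nat.factorial k)

open Polynomial Finset Nat

lemma coeff_X_pow_mul_X_add_two_pow (m k : ℕ) :
    (X ^ m * (X + 2 : ℕ[X]) ^ m).coeff k =
      if m ≤ k then 2 ^ (m - (k - m)) * m.choose (k - m) else 0 := by
  rw [coeff_X_pow_mul', ← C_ofNat, coeff_X_add_C_pow, Nat.cast_id]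

theorem Nat.choose_two_mul_two_mul (n p : ℕ) :
    (2 * n).choose (2 * p) =
      ∑ j ∈ range (p + 1), 2 ^ (2 * j) * n.choose (p + j) * (p + j).choose (2 * j) := by
  have hpow : (1 + X : ℕ[X]) ^ (2 * n) = (X * (X + 2) + 1) ^ n := by
    rw [pow_mul]; ring
  set f : ℕ → ℕ := fun m => (X ^ m * (X + 2 : ℕ[X]) ^ m).coeff (2 * p) * n.choose m
  have hsum : (2 * n).choose (2 * p) = ∑ m ∈ range (n + 1), f m := by
    rw [← Nat.cast_id ((2 * n).choose (2 * p)), ← coeff_one_add_X_pow ℕ, hpow, add_pow,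
      finsetSum_coeff]
    refine sum_congr rfl fun m _ => ?_
    rw [one_pow, mul_one, ← C_eq_natCast, coeff_mul_C, mul_pow, Nat.cast_id]
  have hsupp : ∀ m, f m ≠ 0 → m ∈ range (n + 1) ∩ Ico p (2 * p + 1) := by
    intro m hm
    simp only [f, coeff_X_pow_mul_X_add_two_pow] at hm
    split_ifs at hm with h
    · simp only [mem_inter, mem_range, mem_Ico]
      refine ⟨?_, ?_, by omega⟩
      · by_contra h'; exact hm (by rw [Nat.choose_eq_zero_of_lt (n := n) (by omega), mul_zero])
      · by_contra h'
        exact hm (by rw [Nat.choose_eq_zero_of_lt (n := m) (by omega)]; simp)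
    · simp at hm
  rw [hsum, ← sum_subset inter_subset_left (fun m _ hm => not_ne_iff.mp (mt (hsupp m) hm)),
    sum_subset inter_subset_right (fun m _ hm => not_ne_iff.mp (mt (hsupp m) hm)),
    sum_Ico_eq_sum_range]
  refine sum_congr (by congr 1; omega) fun j hj => ?_
  have hj : j ≤ p := by simpa [Nat.lt_succ_iff] using hj
  simp only [f, coeff_X_pow_mul_X_add_two_pow, if_pos (by omega : p + j ≤ 2 * p),
    show 2 * p - (p + j) = p - j by omega, show p + j - (p - j) = 2 * j by omega,
    Nat.choose_symm_of_eq_add (show p + j = 2 * j + (p - j) by omega)]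
  ring

lemma gchoose_eq_eval_descPochhammer (x : ℝ) (k : ℕ) :
    gchoose x k = (descPochhammer ℝ k).eval x / k ! := by
  rw [gchoose, descPochhammer_eval_eq_prod_range]

lemma gchoose_natCast (n k : ℕ) : gchoose n k = n.choose k := by
  rw [gchoose_eq_eval_descPochhammer, Nat.cast_choose_eq_descPochhammer_div]

lemma Polynomial.eq_of_forall_eval_natCast_eq {R : Type*} [CommRing R] [IsDomain R] [CharZero R]
    {P Q : R[X]} (h : ∀ n : ℕ, P.eval (n : R) = Q.eval (n : R)) : P = Q :=
  eq_of_infinite_eval_eq P Q <| (Set.infinite_range_of_injective Nat.cast_injective).mono <| by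
    rintro _ ⟨n, rfl⟩
    exact h n

theorem gchoose_two_alpha_identity_general (α : ℝ) (p : ℕ) :
    gchoose (2 * α) (2 * p) =
      ∑ j ∈ Finset.range (p + 1),
        (2 : ℝ) ^ (2 * j) * gchoose α (p + j) * ((p + j).choose (2 * j) : ℝ) := by
  let L : ℝ[X] := C ((2 * p)! : ℝ)⁻¹ * (descPochhammer ℝ (2 * p)).comp (2 * X)
  let R : ℝ[X] := ∑ j ∈ range (p + 1),
    C (2 ^ (2 * j) * ((p + j).choose (2 * j) : ℝ) / (p + j)!) * descPochhammer ℝ (p + j)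
  have hL (x : ℝ) : L.eval x = gchoose (2 * x) (2 * p) := by
    simp [L, eval_comp, gchoose_eq_eval_descPochhammer, div_eq_inv_mul]
  have hR (x : ℝ) : R.eval x = ∑ j ∈ range (p + 1),
      (2 : ℝ) ^ (2 * j) * gchoose x (p + j) * ((p + j).choose (2 * j) : ℝ) := by
    simp only [R, eval_finsetSum, eval_mul, eval_C, gchoose_eq_eval_descPochhammer]
    exact sum_congr rfl fun j _ => by ring
  have hLR : L = R := eq_of_forall_eval_natCast_eq fun n => by
    rw [hL, hR, ← Nat.cast_ofNat, ← Nat.cast_mul]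
    simp only [gchoose_natCast]
    exact_mod_cast Nat.choose_two_mul_two_mul n p
  rw [← hL, hLR, hR]

theorem gchoose_two_alpha_identity (α : ℝ) (hα : 0 < α) (p : ℕ) :
    gchoose (2 * α) (2 * p) =
      ∑ j ∈ Finset.range (p + 1),
        (2 : ℝ) ^ (2 * j) * gchoose α (p + j) * ((p + j).choose (2 * j) : ℝ) :=
  gchoose_two_alpha_identity_general α p
end

section
/- Let λ > 0, 0 < α ≤ 1, and define P^α(k,t) = ((−1)^k / k!) Σ_{r=0}^{∞} ((−λ^α)^r t^r / r!) · Γ(rα+1)/Γ(rα−k+1) for k ∈ ℕ, t ≥ 0. Then the generating function Σ_{k=0}^{∞} P^α(k,t) s^k equals exp(−λ^α (1−s)^α t) for |s| ≤ 1. -/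
/-!
Since `Γ(rα + 1) / Γ(rα - k + 1) = k! * (rα choose k)`, the term `P^α(k,t) s^k` is
`∑_r (-λ^α t)^r / r! * (rα choose k) (-s)^k`. For `β ≥ 0` the binomial coefficients
`(β choose k)` are absolutely summable, with `∑_k |(β choose k)| ≤ 2 e^β`: once `k ≥ β` the
quantity `k |(β choose k)|` decreases and `β |(β choose k)|` is its decrement, so the tail
telescopes. This bound justifies exchanging the two sums, and, with Abel's theorem, extends the
binomial series `∑_k (β choose k) x^k = (1 + x)^β` to `|x| = 1`. Summing over `k` first leaves
the exponential series of `-λ^α (1 - s)^α t`.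
-/

open Real

/-- PMF of the space-fractional Poisson process. -/
noncomputable def sfppPMF (lam α : ℝ) (k : ℕ) (t : ℝ) : ℝ :=
  ((-1 : ℝ) ^ k / (Nat.factorial k)) *
    ∑' r : ℕ, ((-(lam ^ α)) ^ r * t ^ r / (Nat.factorial r)) *
      (Real.Gamma (r * α + 1) / Real.Gamma (r * α - k + 1))

open Finset Filter Topology Nat

theorem Ring.choose_eq_descPochhammer_eval_div {R : Type*} [Field R] [CharZero R] (x : R)
    (k : ℕ) : Ring.choose x k = (descPochhammer R k).eval x / k ! := by
  rw [Ring.choose_eq_smul, ← Polynomial.aeval_eq_smeval, Polynomial.aeval_def,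
    Polynomial.eval₂_eq_eval_map, descPochhammer_map, smul_eq_mul, inv_mul_eq_div]

theorem Ring.choose_succ_right_eq {R : Type*} [Field R] [CharZero R] (x : R) (k : ℕ) :
    Ring.choose x (k + 1) * (k + 1) = Ring.choose x k * (x - k) := by
  have hk : (k ! : R) ≠ 0 := Nat.cast_ne_zero.2 (factorial_ne_zero k)
  have hk1 : (k : R) + 1 ≠ 0 := Nat.cast_add_one_ne_zero k
  simp only [Ring.choose_eq_descPochhammer_eval_div, descPochhammer_succ_eval, factorial_succ,
    cast_mul, cast_add, cast_one]
  field_simp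

namespace Real

theorem Gamma_add_one_div_Gamma_sub_add_one {x : ℝ} (hx : Gamma (x + 1) ≠ 0) (k : ℕ) :
    Gamma (x + 1) / Gamma (x - k + 1) = (descPochhammer ℝ k).eval x := by
  induction k with
  | zero => simp [hx]
  | succ k ih =>
    rw [descPochhammer_succ_eval, ← ih, cast_succ, sub_add_eq_sub_sub, sub_add_cancel]
    rcases eq_or_ne (x - k) 0 with hxk | hxk
    · simp [hxk, Gamma_zero]
    · rw [Gamma_add_one hxk, div_mul_eq_div_div_swap, div_mul_cancel₀ _ hxk]

section AbsChoose

variable {β : ℝ}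

theorem abs_choose_le_pow_div_factorial {k : ℕ} (hk : (k : ℝ) ≤ β + 1) :
    |Ring.choose β k| ≤ β ^ k / k ! := by
  rw [Ring.choose_eq_descPochhammer_eval_div, descPochhammer_eval_eq_prod_range, abs_div,
    abs_prod, Nat.abs_cast]
  gcongr
  calc ∏ j ∈ range k, |β - j| ≤ ∏ _j ∈ range k, β := by
        refine prod_le_prod (fun _ _ => abs_nonneg _) fun j hj => ?_
        have hjk : (j : ℝ) + 1 ≤ k := by exact_mod_cast mem_range.1 hj
        rw [abs_of_nonneg (by linarith)]
        linarith [(Nat.cast_nonneg j : (0 : ℝ) ≤ j)]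
    _ = β ^ k := by rw [prod_const, card_range]

theorem abs_choose_succ_right_eq (k : ℕ) :
    |Ring.choose β (k + 1)| * (k + 1) = |Ring.choose β k| * |β - k| := by
  rw [← abs_of_pos (Nat.cast_add_one_pos k : (0 : ℝ) < k + 1), ← abs_mul, ← abs_mul,
    Ring.choose_succ_right_eq]

theorem mul_sum_Ico_abs_choose_add {m n : ℕ} (hm : β ≤ m) (hmn : m ≤ n) :
    β * ∑ k ∈ Ico m n, |Ring.choose β k| + |Ring.choose β n| * n = |Ring.choose β m| * m := by
  induction n, hmn using Nat.le_induction with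
  | base => simp
  | succ n hmn ih =>
    have hn : β ≤ n := hm.trans (by exact_mod_cast hmn)
    rw [sum_Ico_succ_top hmn, cast_succ, ← ih, abs_choose_succ_right_eq,
      abs_of_nonpos (sub_nonpos.2 hn)]
    ring

theorem sum_Ico_abs_choose_le (hβ : 0 ≤ β) (n : ℕ) :
    ∑ k ∈ Ico (⌊β⌋₊ + 1) n, |Ring.choose β k| ≤ |Ring.choose β ⌊β⌋₊| := by
  set m := ⌊β⌋₊
  rcases hβ.eq_or_lt with rfl | hβ
  · refine (sum_eq_zero fun k hk => ?_).le.trans (abs_nonneg _)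
    rw [Ring.choose_zero_pos ℝ (by simp [m] at hk; omega), abs_zero]
  rcases le_or_gt n (m + 1) with hn | hn
  · rw [Ico_eq_empty_of_le hn, sum_empty]
    exact abs_nonneg _
  have htel := mul_sum_Ico_abs_choose_add (m := m + 1)
    (by push_cast; exact (lt_floor_add_one β).le) hn.le
  rw [cast_succ, abs_choose_succ_right_eq,
    abs_of_nonneg (sub_nonneg.2 (floor_le hβ.le))] at htel
  refine le_of_mul_le_mul_left ?_ hβ
  linarith [mul_nonneg (abs_nonneg (Ring.choose β n)) (Nat.cast_nonneg (α := ℝ) n),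
    mul_nonneg (abs_nonneg (Ring.choose β m)) (Nat.cast_nonneg (α := ℝ) m)]

theorem sum_range_abs_choose_le (hβ : 0 ≤ β) (n : ℕ) :
    ∑ k ∈ range n, |Ring.choose β k| ≤ 2 * exp β := by
  set m := ⌊β⌋₊
  have hhead (k : ℕ) (hk : k ≤ m) : |Ring.choose β k| ≤ β ^ k / k ! := by
    refine abs_choose_le_pow_div_factorial ?_
    have : (k : ℝ) ≤ m := by exact_mod_cast hk
    linarith [floor_le hβ]
  calc ∑ k ∈ range n, |Ring.choose β k|
      ≤ ∑ k ∈ range (n + (m + 1)), |Ring.choose β k| :=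
        sum_le_sum_of_subset_of_nonneg (range_subset_range.2 (by omega))
          fun _ _ _ => abs_nonneg _
    _ = ∑ k ∈ range (m + 1), |Ring.choose β k|
          + ∑ k ∈ Ico (m + 1) (n + (m + 1)), |Ring.choose β k| :=
        (sum_range_add_sum_Ico _ (by omega)).symm
    _ ≤ ∑ k ∈ range (m + 1), β ^ k / k ! + β ^ m / m ! :=
        add_le_add (sum_le_sum fun k hk => hhead k (by simpa [Nat.lt_succ_iff] using hk))
          ((sum_Ico_abs_choose_le hβ _).trans (hhead m le_rfl))
    _ ≤ exp β + exp β :=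
        add_le_add (sum_le_exp_of_nonneg hβ _) (pow_div_factorial_le_exp (x := β) hβ _)
    _ = 2 * exp β := by ring

theorem summable_abs_choose (hβ : 0 ≤ β) : Summable fun k => |Ring.choose β k| :=
  summable_of_sum_range_le (fun _ => abs_nonneg _) (sum_range_abs_choose_le hβ)

theorem tsum_abs_choose_le (hβ : 0 ≤ β) : ∑' k, |Ring.choose β k| ≤ 2 * exp β :=
  (summable_abs_choose hβ).tsum_le_of_sum_range_le (sum_range_abs_choose_le hβ)

theorem abs_choose_mul_pow_le {x : ℝ} (hx : |x| ≤ 1) (k : ℕ) :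
    |Ring.choose β k * x ^ k| ≤ |Ring.choose β k| := by
  rw [abs_mul, abs_pow]
  exact mul_le_of_le_one_right (abs_nonneg _) (pow_le_one₀ (abs_nonneg x) hx)

end AbsChoose

theorem hasSum_choose_mul_pow_of_abs_lt {β x : ℝ} (hx : |x| < 1) :
    HasSum (fun k => Ring.choose β k * x ^ k) ((1 + x) ^ β) := by
  have := (one_add_rpow_hasFPowerSeriesOnBall_zero (a := β)).hasSum (y := x)
    (by simpa [← ofReal_norm] using hx)
  simpa [binomialSeries, FormalMultilinearSeries.ofScalars_apply_eq, mul_comm] using this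

theorem hasSum_choose_mul_pow {β : ℝ} (hβ : 0 ≤ β) {x : ℝ} (hx : |x| ≤ 1) :
    HasSum (fun k => Ring.choose β k * x ^ k) ((1 + x) ^ β) := by
  have hsum : Summable fun k => Ring.choose β k * x ^ k :=
    .of_norm_bounded (summable_abs_choose hβ) (abs_choose_mul_pow_le hx)
  have habel := tendsto_tsum_powerSeries_nhdsWithin_lt hsum.hasSum.tendsto_sum_nat
  have hinterior : (fun y => ∑' k, Ring.choose β k * x ^ k * y ^ k)
      =ᶠ[𝓝[<] 1] fun y => (1 + x * y) ^ β := by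
    filter_upwards [Ioo_mem_nhdsLT zero_lt_one] with y hy
    simp_rw [mul_assoc, ← mul_pow]
    refine (hasSum_choose_mul_pow_of_abs_lt ?_).tsum_eq
    rw [abs_mul, abs_of_pos hy.1]
    exact (mul_le_of_le_one_left hy.1.le hx).trans_lt hy.2
  have hcont : Tendsto (fun y => (1 + x * y) ^ β) (𝓝[<] 1) (𝓝 ((1 + x) ^ β)) := by
    have : Continuous fun y : ℝ => (1 + x * y) ^ β :=
      (continuous_rpow_const hβ).comp (by fun_prop)
    simpa using (this.tendsto 1).mono_left nhdsWithin_le_nhds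
  rw [← tendsto_nhds_unique (habel.congr' hinterior) hcont]
  exact hsum.hasSum

end Real

section DoubleSeries

variable {α x : ℝ}

theorem summable_pow_div_factorial_mul_choose_mul_pow (hα : 0 ≤ α) (hx : |x| ≤ 1) (a : ℝ) :
    Summable fun p : ℕ × ℕ => a ^ p.1 / p.1 ! * (Ring.choose (p.1 * α) p.2 * x ^ p.2) := by
  have hβ (r : ℕ) : 0 ≤ (r : ℝ) * α := by positivity
  have hrow (r : ℕ) : Summable fun k => |Ring.choose (r * α) k * x ^ k| :=
    .of_nonneg_of_le (fun _ => abs_nonneg _) (abs_choose_mul_pow_le hx)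
      (summable_abs_choose (hβ r))
  refine .of_abs <| (summable_prod_of_nonneg fun _ => abs_nonneg _).2 ⟨fun r => ?_, ?_⟩
  · simpa only [abs_mul] using (hrow r).mul_left |a ^ r / r !|
  refine .of_nonneg_of_le (fun _ => tsum_nonneg fun _ => abs_nonneg _) (fun r => ?_)
    ((summable_pow_div_factorial (|a| * exp α)).mul_left 2)
  calc ∑' k, |a ^ r / r ! * (Ring.choose (r * α) k * x ^ k)|
      = |a ^ r / r !| * ∑' k, |Ring.choose (r * α) k * x ^ k| := by
        simp_rw [abs_mul (a ^ r / r !)]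
        exact tsum_mul_left
    _ ≤ |a ^ r / r !| * (2 * exp (r * α)) := by
        gcongr
        calc ∑' k, |Ring.choose (r * α) k * x ^ k| ≤ ∑' k, |Ring.choose (r * α) k| :=
              (hrow r).tsum_le_tsum (abs_choose_mul_pow_le hx) (summable_abs_choose (hβ r))
          _ ≤ 2 * exp (r * α) := tsum_abs_choose_le (hβ r)
    _ = 2 * ((|a| * exp α) ^ r / r !) := by
        rw [abs_div, abs_pow, Nat.abs_cast, mul_pow, exp_nat_mul]
        ring

theorem tsum_tsum_pow_div_factorial_mul_choose_mul_pow (hα : 0 ≤ α) (hx : |x| ≤ 1) (a : ℝ) :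
    ∑' k, ∑' r, a ^ r / r ! * (Ring.choose (r * α) k * x ^ k) = exp (a * (1 + x) ^ α) := by
  have h1x : 0 ≤ 1 + x := by linarith [neg_abs_le x]
  have hrow (r : ℕ) : ∑' k, a ^ r / r ! * (Ring.choose (r * α) k * x ^ k)
      = (a * (1 + x) ^ α) ^ r / r ! := by
    rw [tsum_mul_left, (hasSum_choose_mul_pow (by positivity) hx).tsum_eq, mul_pow,
      ← rpow_natCast ((1 + x) ^ α), ← rpow_mul h1x, mul_comm α]
    ring
  rw [Summable.tsum_comm (f := fun r k => a ^ r / r ! * (Ring.choose (r * α) k * x ^ k))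
    (summable_pow_div_factorial_mul_choose_mul_pow hα hx a)]
  simp_rw [hrow]
  rw [exp_eq_exp_ℝ]
  exact (NormedSpace.expSeries_div_hasSum_exp _).tsum_eq

end DoubleSeries

theorem sfppPMF_mul_pow {lam α : ℝ} (hα : 0 ≤ α) (k : ℕ) (t s : ℝ) :
    sfppPMF lam α k t * s ^ k =
      ∑' r : ℕ, (-(lam ^ α) * t) ^ r / r ! * (Ring.choose (r * α) k * (-s) ^ k) := by
  have hΓ (r : ℕ) : Gamma (r * α + 1) / Gamma (r * α - k + 1) = k ! * Ring.choose (r * α) k := by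
    rw [Gamma_add_one_div_Gamma_sub_add_one (Gamma_pos_of_pos (by positivity)).ne',
      Ring.choose_eq_descPochhammer_eval_div, mul_div_cancel₀ _ (by positivity)]
  simp_rw [sfppPMF, hΓ, ← tsum_mul_left, ← tsum_mul_right]
  refine tsum_congr fun r => ?_
  rw [neg_pow s, mul_pow]
  field_simp

theorem sfpp_pgf_general (lam α t s : ℝ) (hα0 : 0 < α) (hs : |s| ≤ 1) :
    ∑' k : ℕ, sfppPMF lam α k t * s ^ k =
      Real.exp (-(lam ^ α) * (1 - s) ^ α * t) := by
  simp_rw [sfppPMF_mul_pow hα0.le]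
  rw [tsum_tsum_pow_div_factorial_mul_choose_mul_pow hα0.le (by rwa [abs_neg]),
    ← sub_eq_add_neg]
  ring_nf

theorem sfpp_pgf (lam α t s : ℝ) (hlam : 0 < lam) (hα0 : 0 < α) (hα1 : α ≤ 1)
    (ht : 0 ≤ t) (hs : |s| ≤ 1) :
    ∑' k : ℕ, sfppPMF lam α k t * s ^ k =
      Real.exp (-(lam ^ α) * (1 - s) ^ α * t) :=
  sfpp_pgf_general lam α t s hα0 hs
end

section
/- Let a, b > 0, c ∈ ℝ, and η ∈ ℝ. The Laplace transform of t ↦ t^{b−1} M^c_{a,b}(−η t^a) equals s ↦ s^{ac−b}/(s^a + η)^c for sufficiently large real s, where M^c_{a,b}(z) = Σ_{n=0}^{∞} (c)_n z^n / (Γ(an+b) n!) is the generalized (Prabhakar) Mittag-Leffler function and (c)_n is the Pochhammer symbol. -/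
/-!
Integrating the series of `M^c_{a,b}` term by term, `t ^ (a n + b - 1)` contributes
`Γ(a n + b) / s ^ (a n + b)`; this Gamma factor cancels the one in the coefficient, leaving
`s ^ (-b)` times the binomial series `∑ (c)_n (-η / s ^ a) ^ n / n! = (1 + η / s ^ a) ^ (-c)`.
For `|η| < s ^ a` the same computation with absolute values gives a convergent series, which
justifies the interchange of sum and integral.
-/

open Real MeasureTheory

/-- Prabhakar generalized Mittag-Leffler function `M^c_{a,b}(z)`. -/
noncomputable def prabhakar (a b c z : ℝ) : ℝ :=
  ∑' n : ℕ, (ascPochhammer ℝ n).eval c * z ^ n / (Real.Gamma (a * n + b) * Nat.factorial n)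

open Set
open scoped Nat

lemma Ring.choose_add_sub_one_eq_ascPochhammer_div {K : Type*} [Field K] [CharZero K] (c : K)
    (n : ℕ) : Ring.choose (c + n - 1) n = (ascPochhammer K n).eval c / n ! := by
  rw [← Ring.multichoose_eq, eq_div_iff (Nat.cast_ne_zero.2 n.factorial_ne_zero), mul_comm,
    ← nsmul_eq_mul, Ring.factorial_nsmul_multichoose_eq_ascPochhammer,
    Polynomial.ascPochhammer_smeval_eq_eval]

lemma mem_eball_zero_one_of_abs_lt_one {x : ℝ} (hx : |x| < 1) :
    x ∈ Metric.eball (0 : ℝ) 1 := by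
  simpa [enorm_eq_nnnorm, ← NNReal.coe_lt_coe] using hx

lemma hasSum_ascPochhammer_mul_pow_div_factorial (c : ℝ) {x : ℝ} (hx : |x| < 1) :
    HasSum (fun n : ℕ ↦ (ascPochhammer ℝ n).eval c * x ^ n / n !) ((1 - x) ^ (-c)) := by
  have := (one_div_one_sub_rpow_hasFPowerSeriesOnBall_zero c).hasSum
    (mem_eball_zero_one_of_abs_lt_one hx)
  simp only [FormalMultilinearSeries.ofScalars_apply_eq, zero_add, smul_eq_mul,
    Ring.choose_add_sub_one_eq_ascPochhammer_div, div_mul_eq_mul_div] at this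
  rwa [rpow_neg (by linarith [abs_lt.1 hx]), ← one_div]

lemma summable_abs_ascPochhammer_mul_pow_div_factorial (c : ℝ) {x : ℝ} (hx : |x| < 1) :
    Summable (fun n : ℕ ↦ |(ascPochhammer ℝ n).eval c| * |x| ^ n / n !) := by
  have := FormalMultilinearSeries.summable_norm_apply _ <|
    (one_div_one_sub_rpow_hasFPowerSeriesOnBall_zero c).r_le.trans_lt'
      (mem_eball_zero_one_of_abs_lt_one hx)
  simpa only [FormalMultilinearSeries.ofScalars_apply_eq, smul_eq_mul,
    Ring.choose_add_sub_one_eq_ascPochhammer_div, norm_mul, norm_div, norm_pow,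
    Real.norm_eq_abs, Nat.abs_cast, div_mul_eq_mul_div] using this

lemma integrableOn_exp_neg_mul_mul_rpow {s p : ℝ} (hs : 0 < s) (hp : 0 < p) :
    IntegrableOn (fun t ↦ exp (-s * t) * t ^ (p - 1)) (Ioi 0) := by
  simpa [mul_comm] using integrableOn_rpow_mul_exp_neg_mul_rpow (by linarith) one_pos hs
    (s := p - 1)

lemma integral_exp_neg_mul_mul_rpow {s p : ℝ} (hs : 0 < s) (hp : 0 < p) :
    ∫ t in Ioi 0, exp (-s * t) * t ^ (p - 1) = Gamma p / s ^ p := by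
  simpa [mul_comm, div_eq_mul_inv, inv_rpow hs.le] using integral_rpow_mul_exp_neg_mul_Ioi hp hs

theorem integral_exp_neg_mul_mul_tsum_rpow {ι : Type*} [Countable ι] {s : ℝ} (hs : 0 < s)
    {k p : ι → ℝ} (hp : ∀ n, 0 < p n)
    (hk : Summable fun n ↦ |k n| * (Gamma (p n) / s ^ p n)) :
    ∫ t in Ioi 0, exp (-s * t) * ∑' n, k n * t ^ (p n - 1)
      = ∑' n, k n * (Gamma (p n) / s ^ p n) := by
  have hnorm (n : ι) : ∫ t in Ioi 0, ‖k n * (exp (-s * t) * t ^ (p n - 1))‖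
      = |k n| * (Gamma (p n) / s ^ p n) := by
    rw [← integral_exp_neg_mul_mul_rpow hs (hp n), ← integral_const_mul]
    refine setIntegral_congr_fun measurableSet_Ioi fun t (ht : 0 < t) ↦ ?_
    rw [norm_mul, norm_eq_abs, norm_of_nonneg (by positivity)]
  calc ∫ t in Ioi 0, exp (-s * t) * ∑' n, k n * t ^ (p n - 1)
      = ∫ t in Ioi 0, ∑' n, k n * (exp (-s * t) * t ^ (p n - 1)) := by
        congr 1 with t
        rw [← tsum_mul_left]
        congr 1 with n
        ring
    _ = ∑' n, ∫ t in Ioi 0, k n * (exp (-s * t) * t ^ (p n - 1)) :=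
        (integral_tsum_of_summable_integral_norm
          (fun n ↦ (integrableOn_exp_neg_mul_mul_rpow hs (hp n)).const_mul (k n))
          (by simpa only [hnorm] using hk)).symm
    _ = ∑' n, k n * (Gamma (p n) / s ^ p n) := by
        simp only [integral_const_mul, integral_exp_neg_mul_mul_rpow hs (hp _)]

lemma rpow_sub_one_mul_prabhakar_neg_mul_rpow (a b c η : ℝ) {t : ℝ} (ht : 0 < t) :
    t ^ (b - 1) * prabhakar a b c (-η * t ^ a)
      = ∑' n : ℕ, (ascPochhammer ℝ n).eval c * (-η) ^ n / (Gamma (a * n + b) * n !)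
          * t ^ (a * n + b - 1) := by
  rw [prabhakar, ← tsum_mul_left]
  congr 1 with n
  have : t ^ (a * n + b - 1) = t ^ (b - 1) * (t ^ a) ^ n := by
    rw [← rpow_mul_natCast ht.le, ← rpow_add ht]
    ring_nf
  rw [this, mul_pow]
  ring

lemma mul_pow_div_mul_factorial_mul_div_rpow {a b s G : ℝ} (P w : ℝ) {n : ℕ} (hs : 0 < s)
    (hG : G ≠ 0) :
    P * w ^ n / (G * n !) * (G / s ^ (a * n + b))
      = P * (w / s ^ a) ^ n / n ! * s ^ (-b) := by
  rw [rpow_add hs, rpow_mul_natCast hs.le, rpow_neg hs.le, div_pow]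
  field_simp

lemma summable_abs_mul_Gamma_div_rpow {a b s : ℝ} (c η : ℝ) (ha : 0 ≤ a) (hb : 0 < b)
    (hs : 0 < s) (hx : |-η / s ^ a| < 1) :
    Summable fun n : ℕ ↦ |(ascPochhammer ℝ n).eval c * (-η) ^ n / (Gamma (a * n + b) * n !)|
      * (Gamma (a * n + b) / s ^ (a * n + b)) := by
  refine ((summable_abs_ascPochhammer_mul_pow_div_factorial c hx).mul_right (s ^ (-b))).congr
    fun n ↦ ?_
  have hΓ : 0 < Gamma (a * n + b) := Gamma_pos_of_pos (by positivity)
  simp only [abs_div, abs_mul, abs_pow, abs_neg, Nat.abs_cast, abs_of_pos hΓ,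
    abs_of_pos (rpow_pos_of_pos hs a)]
  exact (mul_pow_div_mul_factorial_mul_div_rpow _ _ hs hΓ.ne').symm

lemma one_sub_neg_div_rpow_rpow_neg_mul_rpow_neg {a b c s η : ℝ} (hs : 0 < s)
    (hsη : 0 < s ^ a + η) :
    (1 - -η / s ^ a) ^ (-c) * s ^ (-b) = s ^ (a * c - b) / (s ^ a + η) ^ c := by
  have hsa : 0 < s ^ a := rpow_pos_of_pos hs a
  rw [show 1 - -η / s ^ a = (s ^ a + η) / s ^ a by field_simp; ring,
    div_rpow hsη.le hsa.le, ← rpow_mul hs.le, rpow_neg hsη.le, rpow_sub hs,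
    rpow_neg hs.le, mul_neg, rpow_neg hs.le]
  field_simp

theorem laplace_prabhakar (a b c η : ℝ) (ha : 0 < a) (hb : 0 < b) :
    ∃ S : ℝ, ∀ s : ℝ, S < s →
      ∫ t in Set.Ioi (0 : ℝ),
          Real.exp (-s * t) * t ^ (b - 1) * prabhakar a b c (-η * t ^ a)
        = s ^ (a * c - b) / (s ^ a + η) ^ c := by
  refine ⟨|η| ^ a⁻¹, fun s hS ↦ ?_⟩
  have hs : 0 < s := (rpow_nonneg (abs_nonneg η) _).trans_lt hS
  have hsa : |η| < s ^ a := by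
    simpa [rpow_inv_rpow (abs_nonneg η) ha.ne'] using
      rpow_lt_rpow (rpow_nonneg (abs_nonneg η) _) hS ha
  have hx : |-η / s ^ a| < 1 := by
    rwa [abs_div, abs_neg, abs_of_pos (hsa.trans_le' (abs_nonneg η)), div_lt_one (by positivity)]
  have hΓ (n : ℕ) : Gamma (a * n + b) ≠ 0 := (Gamma_pos_of_pos (by positivity)).ne'
  calc ∫ t in Ioi 0, exp (-s * t) * t ^ (b - 1) * prabhakar a b c (-η * t ^ a)
      = ∫ t in Ioi 0, exp (-s * t) * ∑' n : ℕ,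
          (ascPochhammer ℝ n).eval c * (-η) ^ n / (Gamma (a * n + b) * n !)
            * t ^ (a * n + b - 1) :=
        setIntegral_congr_fun measurableSet_Ioi fun t (ht : 0 < t) ↦ by
          rw [mul_assoc, rpow_sub_one_mul_prabhakar_neg_mul_rpow a b c η ht]
    _ = ∑' n : ℕ, (ascPochhammer ℝ n).eval c * (-η) ^ n / (Gamma (a * n + b) * n !)
          * (Gamma (a * n + b) / s ^ (a * n + b)) :=
        integral_exp_neg_mul_mul_tsum_rpow hs (fun n ↦ by positivity)
          (summable_abs_mul_Gamma_div_rpow c η ha.le hb hs hx)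
    _ = (∑' n : ℕ, (ascPochhammer ℝ n).eval c * (-η / s ^ a) ^ n / n !) * s ^ (-b) := by
        rw [← tsum_mul_right]
        exact tsum_congr fun n ↦ mul_pow_div_mul_factorial_mul_div_rpow _ _ hs (hΓ n)
    _ = s ^ (a * c - b) / (s ^ a + η) ^ c := by
        rw [(hasSum_ascPochhammer_mul_pow_div_factorial c hx).tsum_eq,
          one_sub_neg_div_rpow_rpow_neg_mul_rpow_neg hs (by linarith [neg_abs_le η])]
end

section
/- For ρ, μ > 0, ν > 0, w ∈ ℝ, and t > 0: ∫_0^t y^{μ−1} M^ν_{ρ,μ}(w y^ρ) (t−y)^{ν−1} dy = Γ(ν) t^{ν+μ−1} M^ν_{ρ,μ+ν}(w t^ρ), where M^c_{a,b} is the Prabhakar (generalized Mittag-Leffler) function. -/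
/-!
Expand `M^c_{ρ,μ}(w y^ρ)` into its power series and integrate termwise. The `n`-th term is the
Beta integral `∫₀ᵗ y^(ρn+μ-1) (t-y)^(ν-1) dy = Γ(ρn+μ) Γ(ν) / Γ(ρn+μ+ν) · t^(ρn+μ+ν-1)`,
whose factor `Γ(ρn+μ)` cancels the `1/Γ(ρn+μ)` of the coefficient and turns it into the
coefficient of `M^c_{ρ,μ+ν}`. Summation and integration are exchanged by dominated convergence,
with dominating function `(∑ₙ |coeff n| (|w| t^ρ)^n) · y^(μ-1) (t-y)^(ν-1)`. That series
converges because `Γ(s) ≥ A^(s-1) e^(-A)` for every `A > 0`, so `1/Γ(ρn+b)` decays faster than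
any geometric sequence.
-/

open Real MeasureTheory

open Set Filter Nat

noncomputable def prabhakarCoeff (a b c : ℝ) (n : ℕ) : ℝ :=
  (ascPochhammer ℝ n).eval c / (Gamma (a * n + b) * n !)

theorem prabhakar_eq_tsum (a b c z : ℝ) :
    prabhakar a b c z = ∑' n, prabhakarCoeff a b c n * z ^ n := by
  simp only [prabhakar, prabhakarCoeff, div_mul_eq_mul_div]

theorem abs_ascPochhammer_eval_le (c : ℝ) (n : ℕ) :
    |(ascPochhammer ℝ n).eval c| ≤ (1 + |c|) ^ n * n ! := by
  induction n with
  | zero => simp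
  | succ n ih =>
    have hstep : |c + n| ≤ (1 + |c|) * (n + 1) := by
      calc |c + n| ≤ |c| + n := by simpa using abs_add_le c n
        _ ≤ (1 + |c|) * (n + 1) := by nlinarith [abs_nonneg c, n.cast_nonneg (α := ℝ)]
    rw [ascPochhammer_succ_eval, abs_mul, pow_succ, factorial_succ, cast_mul]
    calc |(ascPochhammer ℝ n).eval c| * |c + n|
        ≤ ((1 + |c|) ^ n * n !) * ((1 + |c|) * (n + 1)) :=
          mul_le_mul ih hstep (abs_nonneg _) (by positivity)
      _ = (1 + |c|) ^ n * (1 + |c|) * (↑(n + 1) * n !) := by push_cast; ring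

theorem rpow_sub_one_mul_exp_neg_le_Gamma {s A : ℝ} (hs : 1 ≤ s) (hA : 0 < A) :
    A ^ (s - 1) * exp (-A) ≤ Gamma s := by
  have hint := GammaIntegral_convergent (by linarith : 0 < s)
  calc A ^ (s - 1) * exp (-A) = ∫ x in Ioi A, exp (-x) * A ^ (s - 1) := by
        rw [integral_mul_const, integral_exp_neg_Ioi, mul_comm]
    _ ≤ ∫ x in Ioi A, exp (-x) * x ^ (s - 1) :=
        setIntegral_mono_on ((integrableOn_exp_neg_Ioi A).mul_const _)
          (hint.mono_set (Ioi_subset_Ioi hA.le)) measurableSet_Ioi fun x hx =>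
            mul_le_mul_of_nonneg_left (rpow_le_rpow hA.le (le_of_lt hx) (by linarith))
              (exp_pos _).le
    _ ≤ ∫ x in Ioi 0, exp (-x) * x ^ (s - 1) :=
        setIntegral_mono_set hint
          (ae_restrict_of_forall_mem measurableSet_Ioi fun x (hx : 0 < x) => by positivity)
          (Ioi_subset_Ioi hA.le).eventuallyLE
    _ = Gamma s := (Gamma_eq_integral (by linarith)).symm

theorem tendsto_mul_natCast_add_atTop {a : ℝ} (ha : 0 < a) (b : ℝ) :
    Tendsto (fun n : ℕ => a * n + b) atTop atTop :=
  tendsto_atTop_add_const_right _ b (tendsto_natCast_atTop_atTop.const_mul_atTop ha)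

theorem summable_pow_div_Gamma_mul_add {a : ℝ} (ha : 0 < a) (b x : ℝ) :
    Summable fun n : ℕ => x ^ n / Gamma (a * n + b) := by
  set A := (2 * |x| + 1) ^ a⁻¹
  have hA : 0 < A := by positivity
  have hAa : A ^ a = 2 * |x| + 1 := rpow_inv_rpow (by positivity) ha.ne'
  have hr : |x| / (2 * |x| + 1) < 1 := by
    rw [div_lt_one (by positivity)]; linarith [abs_nonneg x]
  refine Summable.of_norm_bounded_eventually_nat
    ((summable_geometric_of_lt_one (by positivity) hr).mul_left (exp A * A ^ (1 - b))) ?_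
  filter_upwards [(tendsto_mul_natCast_add_atTop ha b).eventually_ge_atTop 1] with n hn
  have hG := rpow_sub_one_mul_exp_neg_le_Gamma hn hA
  have hGpos : 0 < Gamma (a * n + b) := Gamma_pos_of_pos (by linarith)
  have hpow : A ^ (a * n + b - 1) = (2 * |x| + 1) ^ n * A ^ (b - 1) := by
    rw [add_sub_assoc, rpow_add hA, rpow_mul hA.le, hAa, rpow_natCast]
  rw [norm_div, norm_pow, norm_of_nonneg hGpos.le, div_le_iff₀ hGpos]
  calc ‖x‖ ^ n = exp A * A ^ (1 - b) * (|x| / (2 * |x| + 1)) ^ n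
        * (A ^ (a * n + b - 1) * exp (-A)) := by
        rw [hpow, exp_neg, show 1 - b = -(b - 1) by ring, rpow_neg hA.le, div_pow]
        field_simp
        simp
    _ ≤ exp A * A ^ (1 - b) * (|x| / (2 * |x| + 1)) ^ n * Gamma (a * n + b) := by gcongr

theorem summable_norm_prabhakarCoeff_mul_pow {a : ℝ} (ha : 0 < a) (b c x : ℝ) :
    Summable fun n => ‖prabhakarCoeff a b c n * x ^ n‖ := by
  refine Summable.of_norm_bounded_eventually_nat
    (summable_pow_div_Gamma_mul_add ha b ((1 + |c|) * |x|)) ?_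
  filter_upwards [(tendsto_mul_natCast_add_atTop ha b).eventually_gt_atTop 0] with n hn
  have hGpos : 0 < Gamma (a * n + b) := Gamma_pos_of_pos hn
  have hden : 0 < Gamma (a * n + b) * n ! := by positivity
  rw [norm_norm, prabhakarCoeff, norm_mul, norm_div, norm_of_nonneg hden.le, norm_pow, mul_pow,
    div_mul_eq_mul_div, div_le_div_iff₀ hden hGpos]
  calc ‖(ascPochhammer ℝ n).eval c‖ * ‖x‖ ^ n * Gamma (a * n + b)
      ≤ (1 + |c|) ^ n * n ! * ‖x‖ ^ n * Gamma (a * n + b) := by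
        gcongr; exact abs_ascPochhammer_eval_le c n
    _ = (1 + |c|) ^ n * |x| ^ n * (Gamma (a * n + b) * n !) := by
        rw [Real.norm_eq_abs]; ring

theorem integral_rpow_mul_sub_rpow {p q t : ℝ} (hp : 0 < p) (hq : 0 < q) (ht : 0 < t) :
    ∫ y in (0 : ℝ)..t, y ^ (p - 1) * (t - y) ^ (q - 1)
      = Gamma p * Gamma q / Gamma (p + q) * t ^ (p + q - 1) := by
  have hcpx : ∀ y ∈ uIcc 0 t, ((y ^ (p - 1) * (t - y) ^ (q - 1) : ℝ) : ℂ)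
      = (y : ℂ) ^ ((p : ℂ) - 1) * ((t : ℂ) - y) ^ ((q : ℂ) - 1) := by
    intro y hy
    rw [uIcc_of_le ht.le] at hy
    push_cast [Complex.ofReal_cpow hy.1, Complex.ofReal_cpow (sub_nonneg.2 hy.2)]
    rfl
  apply Complex.ofReal_injective
  rw [← intervalIntegral.integral_ofReal, intervalIntegral.integral_congr hcpx,
    Complex.betaIntegral_scaled _ _ ht,
    Complex.betaIntegral_eq_Gamma_mul_div _ _ (by simpa) (by simpa)]
  push_cast [Complex.ofReal_cpow ht.le, ← Complex.Gamma_ofReal]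
  ring

theorem intervalIntegrable_rpow_mul_sub_rpow {p q t : ℝ} (hp : 0 < p) (hq : 0 < q)
    (ht : 0 < t) :
    IntervalIntegrable (fun y => y ^ (p - 1) * (t - y) ^ (q - 1)) volume 0 t := by
  refine intervalIntegral.intervalIntegrable_of_integral_ne_zero ?_
  rw [integral_rpow_mul_sub_rpow hp hq ht]
  have := Gamma_pos_of_pos hp
  have := Gamma_pos_of_pos hq
  have := Gamma_pos_of_pos (add_pos hp hq)
  positivity

theorem integral_rpow_mul_prabhakarCoeff_mul_pow_mul_sub_rpow {ρ μ ν t : ℝ} (hρ : 0 ≤ ρ)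
    (hμ : 0 < μ) (hν : 0 < ν) (ht : 0 < t) (c w : ℝ) (n : ℕ) :
    ∫ y in (0 : ℝ)..t,
        y ^ (μ - 1) * (prabhakarCoeff ρ μ c n * (w * y ^ ρ) ^ n) * (t - y) ^ (ν - 1)
      = Gamma ν * t ^ (ν + μ - 1) * (prabhakarCoeff ρ (μ + ν) c n * (w * t ^ ρ) ^ n) := by
  have hp : 0 < ρ * n + μ := by positivity
  have hpow : ∀ y : ℝ, 0 < y →
      y ^ (μ - 1) * (w * y ^ ρ) ^ n = w ^ n * y ^ (ρ * n + μ - 1) := by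
    intro y hy
    rw [mul_pow, ← rpow_natCast (y ^ ρ), ← rpow_mul hy.le, add_sub_assoc, rpow_add hy]
    ring
  have hcongr : ∀ᵐ y, y ∈ uIoc 0 t →
      y ^ (μ - 1) * (prabhakarCoeff ρ μ c n * (w * y ^ ρ) ^ n) * (t - y) ^ (ν - 1)
        = prabhakarCoeff ρ μ c n * w ^ n * (y ^ (ρ * n + μ - 1) * (t - y) ^ (ν - 1)) :=
    Eventually.of_forall fun y hy => by
      rw [uIoc_of_le ht.le] at hy
      rw [mul_left_comm, hpow y hy.1]; ring
  rw [intervalIntegral.integral_congr_ae hcongr, intervalIntegral.integral_const_mul,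
    integral_rpow_mul_sub_rpow hp hν ht, prabhakarCoeff, prabhakarCoeff,
    show ρ * n + μ + ν - 1 = ρ * n + (ν + μ - 1) by ring, rpow_add ht, rpow_mul ht.le,
    rpow_natCast, ← add_assoc]
  have := Gamma_pos_of_pos hp
  have := Gamma_pos_of_pos (add_pos hp hν)
  field_simp
  ring

theorem hasSum_integral_rpow_mul_prabhakar_mul_sub_rpow {ρ μ ν t : ℝ} (hρ : 0 < ρ)
    (hμ : 0 < μ) (hν : 0 < ν) (ht : 0 < t) (c w : ℝ) :
    HasSum (fun n : ℕ => ∫ y in (0 : ℝ)..t,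
        y ^ (μ - 1) * (prabhakarCoeff ρ μ c n * (w * y ^ ρ) ^ n) * (t - y) ^ (ν - 1))
      (∫ y in (0 : ℝ)..t, y ^ (μ - 1) * prabhakar ρ μ c (w * y ^ ρ) * (t - y) ^ (ν - 1)) := by
  refine intervalIntegral.hasSum_integral_of_dominated_convergence
    (fun n y => ‖prabhakarCoeff ρ μ c n * (w * t ^ ρ) ^ n‖ * ‖y ^ (μ - 1) * (t - y) ^ (ν - 1)‖)
    (fun n => ?_) (fun n => ?_) ?_ ?_ ?_
  · exact (by fun_prop : Measurable fun y : ℝ => y ^ (μ - 1) *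
      (prabhakarCoeff ρ μ c n * (w * y ^ ρ) ^ n) * (t - y) ^ (ν - 1)).aestronglyMeasurable
  · refine Eventually.of_forall fun y hy => ?_
    rw [uIoc_of_le ht.le] at hy
    have hyρ : |y ^ ρ| ≤ |t ^ ρ| := by
      rw [abs_of_nonneg (rpow_nonneg hy.1.le _), abs_of_nonneg (rpow_nonneg ht.le _)]
      exact rpow_le_rpow hy.1.le hy.2 hρ.le
    calc _ = ‖prabhakarCoeff ρ μ c n * (w * y ^ ρ) ^ n‖
          * ‖y ^ (μ - 1) * (t - y) ^ (ν - 1)‖ := by simp only [norm_mul]; ring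
      _ ≤ _ := by simp only [norm_mul, norm_pow, Real.norm_eq_abs]; gcongr
  · exact Eventually.of_forall fun y _ =>
      (summable_norm_prabhakarCoeff_mul_pow hρ μ c _).mul_right _
  · simp_rw [tsum_mul_right]
    exact (intervalIntegrable_rpow_mul_sub_rpow hμ hν ht).norm.const_mul _
  · refine Eventually.of_forall fun y _ => ?_
    rw [prabhakar_eq_tsum]
    exact ((summable_norm_prabhakarCoeff_mul_pow hρ μ c _).of_norm.hasSum.mul_left _).mul_right _

theorem prabhakar_convolution (ρ μ ν w t : ℝ) (hρ : 0 < ρ) (hμ : 0 < μ)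
    (hν : 0 < ν) (ht : 0 < t) :
    ∫ y in (0 : ℝ)..t, y ^ (μ - 1) * prabhakar ρ μ ν (w * y ^ ρ) * (t - y) ^ (ν - 1)
      = Real.Gamma ν * t ^ (ν + μ - 1) * prabhakar ρ (μ + ν) ν (w * t ^ ρ) := by
  rw [← (hasSum_integral_rpow_mul_prabhakar_mul_sub_rpow hρ hμ hν ht ν w).tsum_eq,
    prabhakar_eq_tsum, ← tsum_mul_left]
  exact tsum_congr fun n =>
    integral_rpow_mul_prabhakarCoeff_mul_pow_mul_sub_rpow hρ.le hμ hν ht ν w n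
end

section
/- For β ∈ (0,1] and λ > 0, the time-fractional Poisson PMF P_β(k,t) = ((λt^β)^k / k!) Σ_{r=0}^{∞} ((k+r)!/r!) (−λt^β)^r / Γ(β(k+r)+1) satisfies Σ_{k=0}^{∞} P_β(k,t) u^k = E_{β,1}(λ t^β (u−1)) for |u| ≤ 1. -/
/-- PMF of the time-fractional Poisson process. -/
noncomputable def tfppPMF (lam β : ℝ) (k : ℕ) (t : ℝ) : ℝ :=
  ((lam * t ^ β) ^ k / (Nat.factorial k)) *
    ∑' r : ℕ, ((Nat.factorial (k + r) : ℝ) / (Nat.factorial r)) *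
      (-(lam * t ^ β)) ^ r / Real.Gamma (β * (k + r) + 1)

/-!
Writing `x = λ t^β`, the coefficient `(k+r)!/(k! r!)` of `P_β(k,t) u^k` is the binomial
coefficient `C(k+r, k)`, so the generating function is the double series
`∑_{k,r} C(k+r, k) (x u)^k (-x)^r / Γ(β(k+r)+1)`. Grouping its terms by `n = k + r` and applying
the binomial theorem turns it into `∑_n (x u - x)^n / Γ(βn+1)`. The regrouping is legitimate
because the series of absolute values regroups to `∑_n (|x u| + |x|)^n / Γ(βn+1)`, which
converges by the ratio test: log-convexity of `Γ` gives `Γ(βn+1+β) ≥ (βn)^β Γ(βn+1)`.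
-/

open Filter Finset

theorem Finset.sum_antidiagonal_choose_mul_pow_mul_pow {R : Type*} [CommSemiring R]
    (c : ℕ → R) (a b : R) (n : ℕ) :
    ∑ p ∈ antidiagonal n, ((p.1 + p.2).choose p.1 : R) * c (p.1 + p.2) * a ^ p.1 * b ^ p.2
      = c n * (a + b) ^ n := by
  rw [(Commute.all a b).add_pow', mul_sum]
  refine sum_congr rfl fun p hp => ?_
  rw [mem_antidiagonal.mp hp, nsmul_eq_mul]
  ring

theorem summable_of_nonneg_of_summable_sum_antidiagonal {f : ℕ × ℕ → ℝ} (hf : ∀ p, 0 ≤ f p)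
    (h : Summable fun n => ∑ p ∈ antidiagonal n, f p) : Summable f := by
  rw [← HasAntidiagonal.sigmaAntidiagonalEquivProd.summable_iff, Function.comp_def,
    summable_sigma_of_nonneg fun _ => hf _]
  refine ⟨fun n => (hasSum_fintype _).summable, ?_⟩
  simpa only [tsum_fintype, HasAntidiagonal.sigmaAntidiagonalEquivProd_apply, sum_coe_sort]
    using h

theorem Summable.tsum_eq_tsum_sum_antidiagonal {α : Type*} [AddCommMonoid α] [TopologicalSpace α]
    [ContinuousAdd α] [T3Space α] {f : ℕ × ℕ → α} (hf : Summable f) :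
    ∑' p, f p = ∑' n, ∑ p ∈ antidiagonal n, f p := by
  rw [← HasAntidiagonal.sigmaAntidiagonalEquivProd.tsum_eq,
    Summable.tsum_sigma' (f := fun q => f (HasAntidiagonal.sigmaAntidiagonalEquivProd q))
    (fun n => (hasSum_fintype _).summable)
    (HasAntidiagonal.sigmaAntidiagonalEquivProd.summable_iff.mpr hf)]
  simp only [tsum_fintype, HasAntidiagonal.sigmaAntidiagonalEquivProd_apply,
    sum_coe_sort]

theorem tsum_tsum_choose_mul_pow_mul_pow {R : Type*} [NormedCommRing R] [NormOneClass R]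
    [CompleteSpace R] (c : ℕ → R) (a b : R)
    (hc : Summable fun n => ‖c n‖ * (‖a‖ + ‖b‖) ^ n) :
    ∑' k, ∑' r, ((k + r).choose k : R) * c (k + r) * a ^ k * b ^ r = ∑' n, c n * (a + b) ^ n := by
  set g : ℕ × ℕ → R := fun p => ((p.1 + p.2).choose p.1 : R) * c (p.1 + p.2) * a ^ p.1 * b ^ p.2
  set G : ℕ × ℕ → ℝ := fun p =>
    ((p.1 + p.2).choose p.1 : ℝ) * ‖c (p.1 + p.2)‖ * ‖a‖ ^ p.1 * ‖b‖ ^ p.2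
  have hG : Summable G := summable_of_nonneg_of_summable_sum_antidiagonal
    (fun p => by positivity)
    (hc.congr fun n => (sum_antidiagonal_choose_mul_pow_mul_pow (‖c ·‖) ‖a‖ ‖b‖ n).symm)
  have hg : Summable g := hG.of_norm_bounded fun p => by
    grw [norm_mul_le, norm_mul_le, norm_mul_le, norm_pow_le, norm_pow_le, Nat.norm_cast_le, norm_one,
      mul_one]
  calc ∑' k, ∑' r, g (k, r) = ∑' p, g p := (hg.tsum_prod' hg.prod_factor).symm
    _ = ∑' n, c n * (a + b) ^ n := by
      simp only [hg.tsum_eq_tsum_sum_antidiagonal, g, sum_antidiagonal_choose_mul_pow_mul_pow]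

namespace Real

theorem rpow_mul_Gamma_add_one_le {x s : ℝ} (hx : 0 < x) (hs : 0 < s) :
    x ^ s * Gamma (x + 1) ≤ Gamma (x + 1 + s) := by
  have hpos := Gamma_pos_of_pos hx
  -- the slope of `log ∘ Gamma` on `[x, x + 1]` is `log x`, and convexity bounds it by the slope
  -- on `[x + 1, x + 1 + s]`
  have hslope := convexOn_log_Gamma.slope_mono_adjacent (Set.mem_Ioi.mpr hx)
    (Set.mem_Ioi.mpr (by linarith : 0 < x + 1 + s)) (lt_add_one x) (lt_add_of_pos_right _ hs)
  simp only [Function.comp_apply, Gamma_add_one hx.ne', add_sub_cancel_left, div_one,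
    log_mul hx.ne' hpos.ne', add_sub_cancel_right, le_div_iff₀ hs] at hslope
  rw [Gamma_add_one hx.ne', ← log_le_log_iff (by positivity) (Gamma_pos_of_pos (by linarith)),
    log_mul (by positivity) (by positivity), log_mul hx.ne' hpos.ne', log_rpow hx]
  linarith

theorem summable_pow_div_Gamma_mul_add_one {β : ℝ} (hβ : 0 < β) (y : ℝ) :
    Summable fun n : ℕ => y ^ n / Gamma (β * n + 1) := by
  refine summable_of_ratio_norm_eventually_le (r := 1 / 2) (by norm_num) ?_
  have hgrowth : Tendsto (fun n : ℕ => (β * n) ^ β) atTop atTop :=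
    (tendsto_rpow_atTop hβ).comp (tendsto_natCast_atTop_atTop.const_mul_atTop hβ)
  filter_upwards [hgrowth.eventually_ge_atTop (2 * |y| + 1), eventually_gt_atTop 0]
    with n hn hn0
  have hβn : 0 < β * n := by positivity
  have hΓ := Gamma_pos_of_pos (by positivity : 0 < β * n + 1)
  have hstep : (β * n) ^ β * Gamma (β * n + 1) ≤ Gamma (β * ↑(n + 1) + 1) := by
    convert rpow_mul_Gamma_add_one_le hβn hβ using 2
    push_cast
    ring
  have hΓ' : 0 < Gamma (β * ↑(n + 1) + 1) := Gamma_pos_of_pos (by positivity)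
  rw [norm_div, norm_div, norm_pow, norm_pow, norm_of_nonneg hΓ.le, norm_of_nonneg hΓ'.le,
    div_le_iff₀ hΓ', pow_succ]
  calc ‖y‖ ^ n * ‖y‖ ≤ ‖y‖ ^ n * ((β * n) ^ β / 2) := by
        gcongr
        linarith [norm_eq_abs y]
    _ = 1 / 2 * (‖y‖ ^ n / Gamma (β * n + 1)) * ((β * n) ^ β * Gamma (β * n + 1)) := by
        field_simp
    _ ≤ 1 / 2 * (‖y‖ ^ n / Gamma (β * n + 1)) * Gamma (β * ↑(n + 1) + 1) := by gcongr

end Real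

theorem tfppPMF_mul_pow_eq_tsum (lam β t u : ℝ) (k : ℕ) :
    tfppPMF lam β k t * u ^ k = ∑' r : ℕ, ((k + r).choose k : ℝ) *
      (Real.Gamma (β * ↑(k + r) + 1))⁻¹ * (lam * t ^ β * u) ^ k * (-(lam * t ^ β)) ^ r := by
  rw [tfppPMF, ← tsum_mul_left, ← tsum_mul_right]
  refine tsum_congr fun r => ?_
  rw [Nat.cast_add_choose]
  push_cast
  field_simp
  ring

theorem tfpp_pgf_general (β lam t u : ℝ) (hβ0 : 0 < β) :
    ∑' k : ℕ, tfppPMF lam β k t * u ^ k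
      = ∑' n : ℕ, (lam * t ^ β * (u - 1)) ^ n / Real.Gamma (β * n + 1) := by
  set x := lam * t ^ β
  rw [tsum_congr (tfppPMF_mul_pow_eq_tsum lam β t u),
    tsum_tsum_choose_mul_pow_mul_pow (fun n : ℕ => (Real.Gamma (β * n + 1))⁻¹)]
  · refine tsum_congr fun n => ?_
    ring
  · refine (Real.summable_pow_div_Gamma_mul_add_one hβ0 (‖x * u‖ + ‖-x‖)).congr fun n => ?_
    rw [norm_inv, Real.norm_of_nonneg (Real.Gamma_pos_of_pos (by positivity)).le, div_eq_inv_mul]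

theorem tfpp_pgf (β lam t u : ℝ) (hβ0 : 0 < β) (hβ1 : β ≤ 1) (hlam : 0 < lam)
    (ht : 0 ≤ t) (hu : |u| ≤ 1) :
    ∑' k : ℕ, tfppPMF lam β k t * u ^ k
      = ∑' n : ℕ, (lam * t ^ β * (u - 1)) ^ n / Real.Gamma (β * n + 1) :=
  tfpp_pgf_general β lam t u hβ0
end
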